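/- arXiv:2403.04753 — 4 statements merged into one kernel-verified Lean document; each statement's English description precedes it below -/
import Mathlib

section
/- Fix K ≥ 1 and a maximum-data vector m = (m₁,...,m_K) of positive integers. For a participation profile τ = (τ₁,...,τ_K) with τ_k ∈ {0,...,m_k}, define M(τ) = #{k : τ_k ≠ m_k}, |τ| = ∑_k τ_k, and c_t(τ) = ∑_{l=0}^{M(τ)} C(M(τ),l) (-1)^l / (|τ| + l + t). Then for every positive integer t, ∑_{τ ∈ ∏_k {0,...,m_k}} c_t(τ) = 1/t. -/
open Finset

noncomputable def Fc (t M S : ℕ) : ℝ :=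
  ∑ l ∈ Finset.range (M + 1), (M.choose l : ℝ) * (-1) ^ l / ((S : ℝ) + l + t)

lemma Fc_pos_denom (t : ℕ) (ht : 1 ≤ t) (S l : ℕ) : ((S : ℝ) + l + t) ≠ 0 := by
  have : (0:ℝ) < (S : ℝ) + l + t := by
    have : (1:ℝ) ≤ (t:ℝ) := by exact_mod_cast ht
    positivity
  linarith

lemma Fc_rec (t : ℕ) (ht : 1 ≤ t) (M S : ℕ) :
    Fc t (M + 1) S = Fc t M S - Fc t M (S + 1) := by
  unfold Fc
  rw [Finset.sum_range_succ' (fun l => ((M+1).choose l : ℝ) * (-1) ^ l / ((S : ℝ) + l + t))]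
  push_cast
  have h1 : ∀ l, ((M+1).choose (l+1) : ℝ) = (M.choose l : ℝ) + (M.choose (l+1) : ℝ) := by
    intro l
    rw [Nat.choose_succ_succ]
    push_cast; ring
  have split : ∑ l ∈ Finset.range (M+1),
      ((M+1).choose (l+1) : ℝ) * (-1) ^ (l+1) / ((S : ℝ) + (l+1) + t)
      = (∑ l ∈ Finset.range (M+1),
          (M.choose l : ℝ) * (-1) ^ (l+1) / ((S : ℝ) + (l+1) + t))
        + (∑ l ∈ Finset.range (M+1),
          (M.choose (l+1) : ℝ) * (-1) ^ (l+1) / ((S : ℝ) + (l+1) + t)) := by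
    rw [← Finset.sum_add_distrib]
    apply Finset.sum_congr rfl
    intro l _
    rw [h1]; ring
  rw [split]
  have hA : ∑ l ∈ Finset.range (M+1),
      (M.choose l : ℝ) * (-1) ^ (l+1) / ((S : ℝ) + (l+1) + t)
      = - ∑ l ∈ Finset.range (M+1),
        (M.choose l : ℝ) * (-1) ^ l / (((S+1 : ℕ) : ℝ) + l + t) := by
    rw [← Finset.sum_neg_distrib]
    apply Finset.sum_congr rfl
    intro l _
    push_cast
    ring
  have hB : (∑ l ∈ Finset.range (M+1),
      (M.choose (l+1) : ℝ) * (-1) ^ (l+1) / ((S : ℝ) + (l+1) + t))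
      + ((M+1).choose 0 : ℝ) * (-1) ^ 0 / ((S : ℝ) + (0:ℕ) + t)
      = ∑ l ∈ Finset.range (M+1),
        (M.choose l : ℝ) * (-1) ^ l / ((S : ℝ) + l + t) := by
    have := Finset.sum_range_succ' (fun l => (M.choose l : ℝ) * (-1) ^ l / ((S : ℝ) + l + t)) (M+1)
    -- ∑_{l ∈ range (M+2)} f l = ∑_{l ∈ range (M+1)} f (l+1) + f 0
    have h2 : ∑ l ∈ Finset.range (M+1+1),
        (M.choose l : ℝ) * (-1) ^ l / ((S : ℝ) + l + t)
        = ∑ l ∈ Finset.range (M+1),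
          (M.choose l : ℝ) * (-1) ^ l / ((S : ℝ) + l + t) := by
      rw [Finset.sum_range_succ, Nat.choose_succ_self]
      simp
    calc (∑ l ∈ Finset.range (M+1),
        (M.choose (l+1) : ℝ) * (-1) ^ (l+1) / ((S : ℝ) + (l+1) + t))
        + ((M+1).choose 0 : ℝ) * (-1) ^ 0 / ((S : ℝ) + (0:ℕ) + t)
        = ∑ l ∈ Finset.range (M+1+1),
          (M.choose l : ℝ) * (-1) ^ l / ((S : ℝ) + l + t) := by
          rw [this]; norm_num
      _ = _ := h2
  push_cast at hA hB ⊢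
  linarith [hA, hB]

lemma Fc_tel (t : ℕ) (ht : 1 ≤ t) (M S m : ℕ) :
    ∑ j : Fin (m + 1), Fc t (M + if (j : ℕ) ≠ m then 1 else 0) ((j : ℕ) + S) = Fc t M S := by
  rw [Fin.sum_univ_eq_sum_range (fun j => Fc t (M + if j ≠ m then 1 else 0) (j + S))]
  rw [Finset.sum_range_succ]
  simp only [ne_eq, not_true_eq_false, if_false, add_zero]
  have step : ∀ j ∈ Finset.range m,
      Fc t (M + if ¬ j = m then 1 else 0) (j + S)
      = Fc t M (j + S) - Fc t M ((j+1) + S) := by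
    intro j hj
    have hjm : j ≠ m := Nat.ne_of_lt (Finset.mem_range.mp hj)
    rw [if_pos hjm, Fc_rec t ht M (j + S)]
    congr 2
    omega
  rw [Finset.sum_congr rfl step]
  rw [Finset.sum_range_sub' (fun j => Fc t M (j + S))]
  simp

lemma Fc_main (t : ℕ) (ht : 1 ≤ t) :
    ∀ K (m : Fin K → ℕ),
      ∑ τ : ((k : Fin K) → Fin (m k + 1)),
        Fc t ((Finset.univ.filter (fun k => (τ k : ℕ) ≠ m k)).card) (∑ k, (τ k : ℕ))
      = Fc t 0 0 := by
  intro K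
  induction K with
  | zero =>
    intro m
    simp
  | succ K ih =>
    intro m
    rw [← Equiv.sum_comp (Fin.consEquiv (fun k => Fin (m k + 1)))
      (fun τ => Fc t ((Finset.univ.filter (fun k => (τ k : ℕ) ≠ m k)).card) (∑ k, (τ k : ℕ)))]
    rw [Fintype.sum_prod_type]
    have key : ∀ (j : Fin (m 0 + 1)) (σ : (k : Fin K) → Fin (m k.succ + 1)),
        Fc t ((Finset.univ.filter
            (fun k => ((Fin.consEquiv (fun k => Fin (m k + 1)) (j, σ)) k : ℕ) ≠ m k)).card)
          (∑ k, ((Fin.consEquiv (fun k => Fin (m k + 1)) (j, σ)) k : ℕ))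
        = Fc t ((Finset.univ.filter (fun k : Fin K => (σ k : ℕ) ≠ m k.succ)).card
              + if (j : ℕ) ≠ m 0 then 1 else 0)
            ((j : ℕ) + ∑ k, (σ k : ℕ)) := by
      intro j σ
      have hM : (Finset.univ.filter
          (fun k => ((Fin.consEquiv (fun k => Fin (m k + 1)) (j, σ)) k : ℕ) ≠ m k)).card
          = (Finset.univ.filter (fun k : Fin K => (σ k : ℕ) ≠ m k.succ)).card
            + if (j : ℕ) ≠ m 0 then 1 else 0 := by
        simp only [Finset.card_filter]
        rw [Fin.sum_univ_succ]
        simp [Fin.consEquiv, add_comm]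
      have hS : (∑ k, ((Fin.consEquiv (fun k => Fin (m k + 1)) (j, σ)) k : ℕ))
          = (j : ℕ) + ∑ k, (σ k : ℕ) := by
        rw [Fin.sum_univ_succ]
        simp [Fin.consEquiv]
      rw [hM, hS]
    simp only [key]
    rw [Finset.sum_comm]
    have inner : ∀ σ : (k : Fin K) → Fin (m k.succ + 1),
        ∑ j : Fin (m 0 + 1),
          Fc t ((Finset.univ.filter (fun k : Fin K => (σ k : ℕ) ≠ m k.succ)).card
              + if (j : ℕ) ≠ m 0 then 1 else 0)
            ((j : ℕ) + ∑ k, (σ k : ℕ))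
        = Fc t ((Finset.univ.filter (fun k : Fin K => (σ k : ℕ) ≠ m k.succ)).card)
            (∑ k, (σ k : ℕ)) := by
      intro σ
      exact Fc_tel t ht _ _ (m 0)
    rw [Finset.sum_congr rfl (fun σ _ => inner σ)]
    exact ih (fun k => m k.succ)

/-- Lemma 2 (sum of multi-choice Shapley coefficients): for `K ≥ 1` agents with
maximum-data vector `m` of positive integers, and any `t ≥ 1`, summing
`c_t(τ) = ∑_{l=0}^{M(τ)} C(M(τ),l) (-1)^l / (|τ|+l+t)` over all participation profiles
`τ ∈ ∏_k {0,…,m_k}` gives `1/t`, where `M(τ) = #{k : τ_k ≠ m_k}` and `|τ| = ∑_k τ_k`. -/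
theorem coefficient_sum_eq_inv (K : ℕ) (hK : 1 ≤ K) (m : Fin K → ℕ) (hm : ∀ k, 1 ≤ m k)
    (t : ℕ) (ht : 1 ≤ t) :
    ∑ τ : ((k : Fin K) → Fin (m k + 1)),
      ∑ l ∈ Finset.range ((Finset.univ.filter (fun k => (τ k : ℕ) ≠ m k)).card + 1),
        (((Finset.univ.filter (fun k => (τ k : ℕ) ≠ m k)).card.choose l : ℝ)) * (-1) ^ l /
          ((∑ k, (τ k : ℕ) : ℕ) + l + t)
      = 1 / (t : ℝ) := by
  have := Fc_main t ht K m
  unfold Fc at this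
  rw [this]
  simp
end

section
/- Consider the multi-choice Shapley value with linear weights: ψ_{i,k}(v) = ∑_{j=1}^{i} ∑_{τ : τ_k = j, τ ≠ 0} [∑_{T ⊆ M_k(τ)} (-1)^{|T|} j/(|τ|+|T|)] · [v(|τ|) − v(|τ|−1)], where the value function v depends only on the total data size |τ|. If an agent k holding i = T + T' samples splits into two identities k₁ and k₂ contributing T and T' samples respectively, and v : ℕ → ℝ is linear (v(n) = v₀ n + b), then ψ_{T,k₁}(v) + ψ_{T',k₂}(v) = ψ_{T+T',k}(v). -/
/-!
If `v` has constant increments `v₀`, then `ψ_{i,k}(v) = v₀ · ∑_{j=1}^{i} w_j`, where `w_j` is the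
total weight of the profiles with `τ_k = j`. Writing `1/(n+s) = ∫₀¹ x^(n+s-1) dx`, the alternating
sum over `S ⊆ M_k(τ)` becomes `∫₀¹ j x^(j-1) · x^(|τ|-j) (1-x)^|M_k(τ)| dx`; summed over the other
agents' data, the integrand is `j x^(j-1)` times the total mass of a product of truncated geometric
laws, i.e. `j x^(j-1)`. Hence `w_j = 1` and `ψ_{i,k}(v) = v₀ i`, which is additive in `i`.
-/

open Finset

/-- Multi-choice Shapley value with linear weights, for a game with `K` players,
maximum-data vector `m`, where the value function depends only on the total data size:
`ψ_{i,k}(v) = ∑_{j=1}^{i} ∑_{τ : τ_k = j, τ ≠ 0}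
  [∑_{S ⊆ M_k(τ)} (-1)^{|S|} j/(|τ|+|S|)] · (v(|τ|) − v(|τ|−1))`,
with `M_k(τ) = {a : τ_a ≠ m_a, a ≠ k}` and `|τ| = ∑_a τ_a`. -/
noncomputable def mcflShapley {K : ℕ} (m : Fin K → ℕ) (k : Fin K) (i : ℕ) (v : ℕ → ℝ) : ℝ :=
  ∑ j ∈ Finset.Icc 1 i,
    ∑ τ : ((a : Fin K) → Fin (m a + 1)),
      if (τ k : ℕ) = j ∧ (∃ a, (τ a : ℕ) ≠ 0) then
        (∑ S ∈ (Finset.univ.filter (fun a => (τ a : ℕ) ≠ m a ∧ a ≠ k)).powerset,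
            (-1 : ℝ) ^ S.card * (j : ℝ) / ((∑ a, (τ a : ℕ) : ℕ) + S.card)) *
          (v (∑ a, (τ a : ℕ)) - v ((∑ a, (τ a : ℕ)) - 1))
      else 0

theorem sum_powerset_neg_pow_card {α R : Type*} [CommRing R] (A : Finset α) (x : R) :
    ∑ S ∈ A.powerset, (-x) ^ #S = (1 - x) ^ #A := by
  simpa [neg_add_eq_sub] using sum_pow_mul_eq_add_pow (-x) (1 : R) A

theorem sum_fin_pow_mul_one_sub_pow {R : Type*} [CommRing R] (n : ℕ) (x : R) :
    ∑ t : Fin (n + 1), x ^ (t : ℕ) * (1 - x) ^ (if (t : ℕ) ≠ n then 1 else 0) = 1 := by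
  have hlt (t : Fin n) : (t : ℕ) ≠ n := t.isLt.ne
  rw [Fin.sum_univ_castSucc]
  simp only [Fin.val_castSucc, Fin.val_last, hlt, ne_eq, not_true_eq_false, not_false_eq_true,
    if_true, if_false, pow_one, pow_zero, mul_one]
  rw [← Finset.sum_mul, Fin.sum_univ_eq_sum_range (x ^ ·), geom_sum_mul_neg, sub_add_cancel]

theorem sum_ite_pow_mul_one_sub_pow {R : Type*} [CommRing R] {K : ℕ} (m : Fin K → ℕ) (k : Fin K)
    {j : ℕ} (hj : j ≤ m k) (x : R) :
    ∑ τ : ((a : Fin K) → Fin (m a + 1)),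
      (if (τ k : ℕ) = j then
        x ^ (∑ a ∈ univ.erase k, (τ a : ℕ)) * (1 - x) ^ #{a | (τ a : ℕ) ≠ m a ∧ a ≠ k}
      else 0) = 1 := by
  classical
  -- The summand factorises over the agents: a point mass at `j` for agent `k`, and the truncated
  -- geometric law `x ^ t * (1 - x) ^ [t ≠ m a]` for every other agent `a`.
  let f (a : Fin K) (t : Fin (m a + 1)) : R :=
    if a = k then (if (t : ℕ) = j then 1 else 0)
    else x ^ (t : ℕ) * (1 - x) ^ (if (t : ℕ) ≠ m a then 1 else 0)
  have hprod (τ : (a : Fin K) → Fin (m a + 1)) :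
      (if (τ k : ℕ) = j then
        x ^ (∑ a ∈ univ.erase k, (τ a : ℕ)) * (1 - x) ^ #{a | (τ a : ℕ) ≠ m a ∧ a ≠ k}
      else 0) = ∏ a, f a (τ a) := by
    have hcard : #{a | (τ a : ℕ) ≠ m a ∧ a ≠ k} =
        ∑ a ∈ univ.erase k, if (τ a : ℕ) ≠ m a then 1 else 0 := by
      rw [sum_boole, Nat.cast_id]
      congr 1
      ext a
      simp [and_comm]
    rw [← mul_prod_erase univ _ (mem_univ k),
      prod_congr rfl fun a ha => if_neg (ne_of_mem_erase ha), prod_mul_distrib,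
      prod_pow_eq_pow_sum, prod_pow_eq_pow_sum, ← hcard]
    simp only [f, if_true]
    split_ifs <;> simp
  rw [sum_congr rfl fun τ _ => hprod τ, ← Fintype.prod_sum]
  refine prod_eq_one fun a _ => ?_
  by_cases ha : a = k
  · subst ha
    simp only [f, if_true]
    rw [Fin.sum_univ_eq_sum_range (fun t => if t = j then (1 : R) else 0), sum_ite_eq']
    simp [Nat.lt_succ_of_le hj]
  · simpa only [f, ha, if_false] using sum_fin_pow_mul_one_sub_pow (m a) x

theorem integral_natCast_mul_pow_pred {j : ℕ} (hj : 1 ≤ j) :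
    ∫ x in (0 : ℝ)..1, (j : ℝ) * x ^ (j - 1) = 1 := by
  have hj0 : (j : ℝ) ≠ 0 := by positivity
  simp [integral_pow, Nat.cast_pred hj, hj0]

theorem sum_powerset_div_eq_integral {α : Type*} (A : Finset α) {j : ℕ} (hj : 1 ≤ j) (r : ℕ) :
    ∑ S ∈ A.powerset, (-1 : ℝ) ^ #S * j / (((j + r : ℕ) : ℝ) + #S) =
      ∫ x in (0 : ℝ)..1, j * x ^ (j - 1) * (x ^ r * (1 - x) ^ #A) := by
  have hterm (s : ℕ) : (-1 : ℝ) ^ s * j / (((j + r : ℕ) : ℝ) + s) =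
      ∫ x in (0 : ℝ)..1, j * x ^ (j - 1) * (x ^ r * (-x) ^ s) := by
    have hpoly : (fun x : ℝ => j * x ^ (j - 1) * (x ^ r * (-x) ^ s)) =
        fun x => (-1 : ℝ) ^ s * j * x ^ (j - 1 + r + s) := by
      funext x
      rw [neg_pow, pow_add, pow_add]
      ring
    rw [hpoly, intervalIntegral.integral_const_mul, integral_pow]
    push_cast [Nat.cast_sub hj]
    simp
    ring
  simp_rw [hterm, ← sum_powerset_neg_pow_card, mul_sum]
  exact (intervalIntegral.integral_finsetSum fun S _ =>
    (by fun_prop : Continuous _).intervalIntegrable _ _).symm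

theorem sum_mcflShapley_weight_eq_one {K : ℕ} (m : Fin K → ℕ) (k : Fin K) {j : ℕ}
    (hj1 : 1 ≤ j) (hj2 : j ≤ m k) :
    ∑ τ : ((a : Fin K) → Fin (m a + 1)),
      (if (τ k : ℕ) = j then
        ∑ S ∈ (univ.filter (fun a => (τ a : ℕ) ≠ m a ∧ a ≠ k)).powerset,
          (-1 : ℝ) ^ #S * j / (((∑ a, (τ a : ℕ) : ℕ) : ℝ) + #S)
      else 0) = 1 := by
  have hτ (τ : (a : Fin K) → Fin (m a + 1)) :
      (if (τ k : ℕ) = j then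
        ∑ S ∈ (univ.filter (fun a => (τ a : ℕ) ≠ m a ∧ a ≠ k)).powerset,
          (-1 : ℝ) ^ #S * j / (((∑ a, (τ a : ℕ) : ℕ) : ℝ) + #S)
      else 0) = ∫ x in (0 : ℝ)..1, j * x ^ (j - 1) *
        (if (τ k : ℕ) = j then
          x ^ (∑ a ∈ univ.erase k, (τ a : ℕ)) * (1 - x) ^ #{a | (τ a : ℕ) ≠ m a ∧ a ≠ k}
        else 0) := by
    split_ifs with h
    · rw [← add_sum_erase univ _ (mem_univ k), h]
      exact sum_powerset_div_eq_integral _ hj1 _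
    · simp
  rw [sum_congr rfl fun τ _ => hτ τ, ← intervalIntegral.integral_finsetSum]
  · simp_rw [← mul_sum, sum_ite_pow_mul_one_sub_pow m k hj2, mul_one]
    exact integral_natCast_mul_pow_pred hj1
  · intro τ _
    apply Continuous.intervalIntegrable
    split_ifs <;> fun_prop

theorem mcflShapley_eq_mul_of_increment_eq {K : ℕ} (m : Fin K → ℕ) (k : Fin K) {i : ℕ}
    (hi : i ≤ m k) {v : ℕ → ℝ} {v₀ : ℝ} (hv : ∀ n, v (n + 1) - v n = v₀) :
    mcflShapley m k i v = v₀ * i := by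
  rw [mcflShapley, sum_congr rfl (g := fun _ => v₀) fun j hj => ?_]
  · simp [mul_comm]
  obtain ⟨hj1, hji⟩ := mem_Icc.mp hj
  conv_rhs => rw [← one_mul v₀, ← sum_mcflShapley_weight_eq_one m k hj1 (hji.trans hi), sum_mul]
  refine sum_congr rfl fun τ _ => ?_
  by_cases h : (τ k : ℕ) = j
  · have hpos : 1 ≤ ∑ a, (τ a : ℕ) :=
      hj1.trans (h ▸ single_le_sum (f := fun a => (τ a : ℕ)) (by simp) (mem_univ k))
    rw [if_pos ⟨h, k, by omega⟩, if_pos h, ← hv, Nat.sub_add_cancel hpos]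
  · simp [h]

theorem shapley_split_eq_of_linear_general (K : ℕ) (others : Fin K → ℕ) (T T' : ℕ)
    (v : ℕ → ℝ) (v₀ b : ℝ)
    (hv : ∀ n, v n = v₀ * n + b) :
    mcflShapley (Fin.cons T (Fin.cons T' others)) 0 T v
      + mcflShapley (Fin.cons T (Fin.cons T' others)) 1 T' v
      = mcflShapley (Fin.cons (T + T') others) 0 (T + T') v := by
  have hinc (n : ℕ) : v (n + 1) - v n = v₀ := by
    rw [hv, hv]
    push_cast
    ring
  rw [mcflShapley_eq_mul_of_increment_eq (i := T) _ 0 le_rfl hinc,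
    mcflShapley_eq_mul_of_increment_eq (i := T') _ 1 le_rfl hinc,
    mcflShapley_eq_mul_of_increment_eq (i := T + T') _ 0 le_rfl hinc]
  push_cast
  ring

/-- If the value function is linear, splitting `i = T + T'` samples between two
false-name identities (in the `(K+2)`-player game with maxima `(T, T', others)`)
yields exactly the honest payoff of agent `k` in the `(K+1)`-player game with maxima
`(T+T', others)`. -/
theorem shapley_split_eq_of_linear (K : ℕ) (others : Fin K → ℕ) (T T' : ℕ)
    (hT : 1 ≤ T) (hT' : 1 ≤ T') (v : ℕ → ℝ) (v₀ b : ℝ)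
    (hv : ∀ n, v n = v₀ * n + b) :
    mcflShapley (Fin.cons T (Fin.cons T' others)) 0 T v
      + mcflShapley (Fin.cons T (Fin.cons T' others)) 1 T' v
      = mcflShapley (Fin.cons (T + T') others) 0 (T + T') v :=
  shapley_split_eq_of_linear_general K others T T' v v₀ b hv
end

section
/- The key difference identity: with c_t(τ) = ∑_{l=0}^{M(τ)} C(M(τ),l)(-1)^l/(|τ|+l+t) and ∇v^t_s = v(s+t) − v(s+t−1), the payoff difference under splitting satisfies ψ_{T,k₁} + ψ_{T',k₂} − ψ_{T+T',k} = ∑_{t=0}^{T−1} ∑_{t₁=1}^{T'} ∑_{τ ∈ T(m_{[2:K]})} [(t₁+t) c_{t₁+t}(τ) − (t₁+t+1) c_{t₁+t+1}(τ)] ∇v^{t₁+t}_{|τ|}. -/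
open Finset

/-- The coefficient `c_t(τ) = ∑_{l=0}^{M(τ)} C(M(τ),l)(-1)^l/(|τ|+l+t)` for a profile `τ`
of the other `K` agents with maxima `others`, where `M(τ) = #{a : τ_a ≠ others_a}`. -/
noncomputable def mcflCoeff {K : ℕ} (others : Fin K → ℕ)
    (τ : (a : Fin K) → Fin (others a + 1)) (t : ℕ) : ℝ :=
  ∑ l ∈ Finset.range ((Finset.univ.filter (fun a => (τ a : ℕ) ≠ others a)).card + 1),
    (((Finset.univ.filter (fun a => (τ a : ℕ) ≠ others a)).card.choose l : ℝ)) * (-1) ^ l /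
      ((∑ a, (τ a : ℕ) : ℕ) + l + t)

/-!
Grouping the subsets `S` in the definition of `ψ` by cardinality turns the payoff of an identity
into `∑_j ∑_τ j c_j(τ) ∇v^j_{|τ|}`, the inner sum running over the profiles of the other agents.
Pulling one agent's level `x` out of a profile, Pascal's rule `C(M+1, l+1) = C(M, l) + C(M, l+1)`
gives `c_t(x, σ) = c_{x+t}(σ) - c_{x+t+1}(σ)` unless `x` is that agent's maximum. So all three
payoffs become sums over the profiles `σ` of the `K` other agents of `c_u(σ) ∇v^u_{|σ|}` and
`c_{u+1}(σ) ∇v^u_{|σ|}` with weights counting the pairs `(j, x)`, `j + x = u`, and for each `σ`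
the identity is a rearrangement of these double sums: the `c_u` part telescopes as `T` grows, the
`c_{u+1}` part is a reindexing.
-/

noncomputable def altBinomRecipSum (M n : ℕ) : ℝ :=
  ∑ l ∈ range (M + 1), (M.choose l : ℝ) * (-1) ^ l / (n + l)

lemma altBinomRecipSum_succ (M n : ℕ) :
    altBinomRecipSum (M + 1) n = altBinomRecipSum M n - altBinomRecipSum M (n + 1) := by
  set a : ℕ → ℝ := fun l => (M.choose l : ℝ) * (-1) ^ l
  have pascal (l : ℕ) : ((M + 1).choose (l + 1) : ℝ) * (-1) ^ (l + 1) = a (l + 1) - a l := by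
    simp only [a, Nat.choose_succ_succ', Nat.cast_add, pow_succ]
    ring
  have shift : altBinomRecipSum M n
      = ∑ l ∈ range (M + 1), a (l + 1) / (n + (l + 1 : ℕ)) + 1 / n := by
    have top : a (M + 1) = 0 := by simp [a]
    calc altBinomRecipSum M n = ∑ l ∈ range (M + 2), a l / (n + (l : ℕ)) := by
          rw [sum_range_succ _ (M + 1), top, zero_div, add_zero]
          rfl
      _ = _ := by
          rw [sum_range_succ']
          simp [a]
  calc altBinomRecipSum (M + 1) n
      = ∑ l ∈ range (M + 1), (a (l + 1) - a l) / (n + (l + 1 : ℕ)) + 1 / n := by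
        rw [altBinomRecipSum, sum_range_succ']
        simp [pascal]
    _ = altBinomRecipSum M n - altBinomRecipSum M (n + 1) := by
        have next : altBinomRecipSum M (n + 1) = ∑ l ∈ range (M + 1), a l / (n + (l + 1 : ℕ)) :=
          sum_congr rfl fun l _ => by push_cast; ring
        rw [shift, next, sum_congr rfl fun l _ => sub_div _ _ _, sum_sub_distrib]
        ring

lemma sum_powerset_neg_one_pow_mul_div {α : Type*} (A : Finset α) (c : ℝ) (n : ℕ) :
    ∑ S ∈ A.powerset, (-1 : ℝ) ^ #S * c / (n + #S) = c * altBinomRecipSum #A n := by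
  rw [sum_powerset, altBinomRecipSum, mul_sum]
  refine sum_congr rfl fun l _ => ?_
  rw [sum_congr rfl fun S hS => by rw [(mem_powersetCard.1 hS).2], sum_const,
    card_powersetCard, nsmul_eq_mul]
  ring

lemma sum_Icc_one_eq_sum_range {M : Type*} [AddCommMonoid M] (f : ℕ → M) (n : ℕ) :
    ∑ j ∈ Icc 1 n, f j = ∑ i ∈ range n, f (i + 1) := by
  rw [range_eq_Ico, sum_Ico_add', ← Ico_add_one_right_eq_Icc]

lemma sum_range_succ_ite_eq_top {M : Type*} [AddCommMonoid M] (f : ℕ → M) (N : ℕ) :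
    ∑ x ∈ range (N + 1), (if x = N then 0 else f x) = ∑ x ∈ range N, f x := by
  rw [sum_range_succ, if_pos rfl, add_zero]
  exact sum_congr rfl fun x hx => if_neg (mem_range.1 hx).ne

noncomputable def splitSum (J N : ℕ) (G : ℕ → ℝ) : ℝ :=
  ∑ j ∈ Icc 1 J, ∑ x ∈ range N, (j : ℝ) * G (j + x)

section SplitIdentity

variable (G : ℕ → ℝ)

lemma splitSum_succ_left (J N : ℕ) :
    splitSum (J + 1) N G = splitSum J N G + ∑ x ∈ range N, ((J + 1 : ℕ) : ℝ) * G (J + 1 + x) :=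
  sum_Icc_succ_top (by omega) _

lemma splitSum_succ_right (J N : ℕ) :
    splitSum J (N + 1) G = splitSum J N G + ∑ j ∈ Icc 1 J, (j : ℝ) * G (j + N) := by
  simp only [splitSum, sum_range_succ, sum_add_distrib]

lemma splitSum_add_splitSum_sub_eq (T T' : ℕ) :
    splitSum T (T' + 1) G + splitSum T' (T + 1) G - ∑ j ∈ Icc 1 (T + T'), (j : ℝ) * G j
      = ∑ t ∈ range T, ∑ t₁ ∈ Icc 1 T', ((t₁ + t : ℕ) : ℝ) * G (t₁ + t) := by
  induction T with
  | zero => simp [splitSum]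
  | succ T ih =>
    set f : ℕ → ℝ := fun i => ((T + 1 + i : ℕ) : ℝ) * G (T + 1 + i)
    -- The row and column added by `T + 1`, minus the new top term of the merged sum, telescope.
    have tele : ∑ i ∈ range T', f (i + 1) + f 0 = ∑ i ∈ range T', f i + f T' :=
      (sum_range_succ' f T').symm.trans (sum_range_succ f T')
    have new_row : ∑ x ∈ range (T' + 1), ((T + 1 : ℕ) : ℝ) * G (T + 1 + x)
        + ∑ j ∈ Icc 1 T', (j : ℝ) * G (j + (T + 1)) = ∑ i ∈ range T', f (i + 1) + f 0 := by
      rw [sum_range_succ', sum_Icc_one_eq_sum_range, add_right_comm, ← sum_add_distrib]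
      congr 1
      refine sum_congr rfl fun i _ => ?_
      simp only [f]
      push_cast
      ring_nf
    have new_col : ∑ t₁ ∈ Icc 1 T', ((t₁ + T : ℕ) : ℝ) * G (t₁ + T) = ∑ i ∈ range T', f i := by
      rw [sum_Icc_one_eq_sum_range]
      exact sum_congr rfl fun i _ => by simp only [f]; ring_nf
    rw [splitSum_succ_left G T, splitSum_succ_right G T' (T + 1),
      show T + 1 + T' = T + T' + 1 by omega, sum_Icc_succ_top (by omega),
      sum_range_succ (fun t => ∑ t₁ ∈ Icc 1 T', ((t₁ + t : ℕ) : ℝ) * G (t₁ + t)), new_col, ← ih]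
    have : f T' = ((T + T' + 1 : ℕ) : ℝ) * G (T + T' + 1) := by simp only [f]; ring_nf
    linarith

lemma splitSum_add_splitSum_swap (T T' : ℕ) :
    splitSum T T' G + splitSum T' T G
      = ∑ t ∈ range T, ∑ t₁ ∈ Icc 1 T', ((t₁ + t + 1 : ℕ) : ℝ) * G (t₁ + t) := by
  have swap : splitSum T' T G = ∑ t ∈ range T, ∑ t₁ ∈ Icc 1 T', (t₁ : ℝ) * G (t₁ + t) := sum_comm
  rw [swap, splitSum, sum_Icc_one_eq_sum_range, ← sum_add_distrib]
  refine sum_congr rfl fun t _ => ?_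
  rw [sum_Icc_one_eq_sum_range, sum_Icc_one_eq_sum_range, ← sum_add_distrib]
  refine sum_congr rfl fun i _ => ?_
  push_cast
  ring_nf

end SplitIdentity

lemma splitSum_difference_identity (T T' : ℕ) (G H : ℕ → ℝ) :
    (splitSum T (T' + 1) G - splitSum T T' H) + (splitSum T' (T + 1) G - splitSum T' T H)
        - ∑ j ∈ Icc 1 (T + T'), (j : ℝ) * G j
      = ∑ t ∈ range T, ∑ t₁ ∈ Icc 1 T',
          (((t₁ + t : ℕ) : ℝ) * G (t₁ + t) - ((t₁ + t + 1 : ℕ) : ℝ) * H (t₁ + t)) := by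
  simp only [sum_sub_distrib]
  linarith [splitSum_add_splitSum_sub_eq G T T', splitSum_add_splitSum_swap H T T']

section

variable {K : ℕ}

abbrev Profile (m : Fin K → ℕ) : Type := (a : Fin K) → Fin (m a + 1)

namespace Profile

variable {m : Fin K → ℕ}

def size (τ : Profile m) : ℕ := ∑ a, (τ a : ℕ)

def numBelowMax (τ : Profile m) : ℕ := #{a | (τ a : ℕ) ≠ m a}

lemma sum_eq_sum_insertNth (m : Fin (K + 1) → ℕ) (p : Fin (K + 1)) (F : Profile m → ℝ) :
    ∑ τ, F τ = ∑ x : Fin (m p + 1), ∑ σ : Profile (fun a => m (p.succAbove a)),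
      F (p.insertNth x σ) := by
  rw [← (Fin.insertNthEquiv _ p).sum_comp, Fintype.sum_prod_type]
  rfl

variable {m : Fin (K + 1) → ℕ} {p : Fin (K + 1)} (x : Fin (m p + 1))
  (σ : Profile (fun a => m (p.succAbove a)))

lemma size_insertNth : size (p.insertNth x σ : Profile m) = x + size σ := by
  simp [size, Fin.sum_univ_succAbove _ p]

lemma numBelowMax_insertNth :
    numBelowMax (p.insertNth x σ : Profile m) = numBelowMax σ + if (x : ℕ) = m p then 0 else 1 := by
  simp only [numBelowMax, card_filter, Fin.sum_univ_succAbove _ p, Fin.insertNth_apply_same,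
    Fin.insertNth_apply_succAbove]
  by_cases h : (x : ℕ) = m p <;> simp [h, add_comm]

lemma card_filter_insertNth_ne_and_ne :
    #{a | ((p.insertNth x σ : Profile m) a : ℕ) ≠ m a ∧ a ≠ p} = numBelowMax σ := by
  simp [numBelowMax, card_filter, Fin.sum_univ_succAbove _ p, Fin.succAbove_ne]

end Profile

lemma mcflCoeff_eq_altBinomRecipSum {m : Fin K → ℕ} (τ : Profile m) (t : ℕ) :
    mcflCoeff m τ t = altBinomRecipSum (Profile.numBelowMax τ) (Profile.size τ + t) :=
  sum_congr rfl fun l _ => by simp only [Profile.size, Profile.numBelowMax]; push_cast; ring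

lemma mcflCoeff_insertNth {m : Fin (K + 1) → ℕ} {p : Fin (K + 1)} (x : Fin (m p + 1))
    (σ : Profile (fun a => m (p.succAbove a))) (t : ℕ) :
    mcflCoeff m (p.insertNth x σ) t
      = mcflCoeff _ σ (x + t) - if (x : ℕ) = m p then 0 else mcflCoeff _ σ (x + t + 1) := by
  rw [mcflCoeff_eq_altBinomRecipSum, Profile.numBelowMax_insertNth, Profile.size_insertNth,
    mcflCoeff_eq_altBinomRecipSum, mcflCoeff_eq_altBinomRecipSum, add_assoc, add_left_comm]
  split_ifs
  · simp
  · rw [altBinomRecipSum_succ, ← add_assoc _ _ 1]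

theorem mcflShapley_eq_sum_profile (m : Fin (K + 1) → ℕ) (p : Fin (K + 1)) {i : ℕ}
    (hi : i ≤ m p) (v : ℕ → ℝ) :
    mcflShapley m p i v = ∑ j ∈ Icc 1 i, ∑ σ : Profile (fun a => m (p.succAbove a)),
      j * mcflCoeff _ σ j * (v (Profile.size σ + j) - v (Profile.size σ + j - 1)) := by
  refine sum_congr rfl fun j hj => ?_
  obtain ⟨hj1, hji⟩ := mem_Icc.1 hj
  set xj : Fin (m p + 1) := ⟨j, by omega⟩
  rw [Profile.sum_eq_sum_insertNth m p, sum_eq_single_of_mem xj (mem_univ _)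
    fun x _ hx => sum_eq_zero fun σ _ => if_neg fun h => hx (Fin.ext (by simpa using h.1))]
  refine sum_congr rfl fun σ _ => ?_
  have hsize : ∑ a, ((p.insertNth xj σ : Profile m) a : ℕ) = σ.size + j :=
    (Profile.size_insertNth _ _).trans (add_comm _ _)
  rw [if_pos ⟨by simp [xj], p, by simp [xj]; omega⟩, hsize, sum_powerset_neg_one_pow_mul_div,
    Profile.card_filter_insertNth_ne_and_ne, mcflCoeff_eq_altBinomRecipSum]

-- The paper's `c_k(σ) ∇v^u_{|σ|}`.
noncomputable def marginalTerm {m : Fin K → ℕ} (v : ℕ → ℝ) (σ : Profile m) (k u : ℕ) : ℝ :=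
  mcflCoeff m σ k * (v (σ.size + u) - v (σ.size + u - 1))

lemma sum_insertNth_eq_sub_marginalTerm (m : Fin (K + 1) → ℕ) (p : Fin (K + 1))
    (σ : Profile (fun a => m (p.succAbove a))) (j : ℕ) (v : ℕ → ℝ) :
    ∑ x : Fin (m p + 1), (j : ℝ) * mcflCoeff m (p.insertNth x σ) j
        * (v (Profile.size (p.insertNth x σ : Profile m) + j)
          - v (Profile.size (p.insertNth x σ : Profile m) + j - 1))
      = ∑ x ∈ range (m p + 1), (j : ℝ) * marginalTerm v σ (j + x) (j + x)
        - ∑ x ∈ range (m p), (j : ℝ) * marginalTerm v σ (j + x + 1) (j + x) := by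
  have summand (x : ℕ) :
      (j : ℝ) * (mcflCoeff _ σ (x + j) - if x = m p then 0 else mcflCoeff _ σ (x + j + 1))
          * (v (x + σ.size + j) - v (x + σ.size + j - 1))
        = (j : ℝ) * marginalTerm v σ (j + x) (j + x)
          - if x = m p then 0 else (j : ℝ) * marginalTerm v σ (j + x + 1) (j + x) := by
    rw [show x + σ.size + j = σ.size + (j + x) by ring, add_comm x j, marginalTerm, marginalTerm]
    split_ifs <;> ring
  simp only [mcflCoeff_insertNth, Profile.size_insertNth]
  rw [Fin.sum_univ_eq_sum_range (fun x => (j : ℝ) * (mcflCoeff _ σ (x + j)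
      - if x = m p then 0 else mcflCoeff _ σ (x + j + 1))
        * (v (x + σ.size + j) - v (x + σ.size + j - 1))), sum_congr rfl fun x _ => summand x,
    sum_sub_distrib, sum_range_succ_ite_eq_top]

lemma sum_Icc_sum_profile_eq_sum_splitSum (m : Fin (K + 1) → ℕ) (p : Fin (K + 1)) (J : ℕ)
    (v : ℕ → ℝ) :
    ∑ j ∈ Icc 1 J, ∑ τ : Profile m, (j : ℝ) * mcflCoeff m τ j
        * (v (τ.size + j) - v (τ.size + j - 1))
      = ∑ σ : Profile (fun a => m (p.succAbove a)),
          (splitSum J (m p + 1) (fun u => marginalTerm v σ u u)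
            - splitSum J (m p) (fun u => marginalTerm v σ (u + 1) u)) := by
  rw [sum_congr rfl fun j _ => (Profile.sum_eq_sum_insertNth m p _).trans sum_comm, sum_comm]
  refine sum_congr rfl fun σ _ => ?_
  rw [splitSum, splitSum, ← sum_sub_distrib]
  exact sum_congr rfl fun j _ => sum_insertNth_eq_sub_marginalTerm m p σ j v

lemma mcflShapley_cons_zero (N : ℕ) (m : Fin K → ℕ) (v : ℕ → ℝ) :
    mcflShapley (Fin.cons N m) 0 N v
      = ∑ σ : Profile m, ∑ j ∈ Icc 1 N, (j : ℝ) * marginalTerm v σ j j := by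
  rw [mcflShapley_eq_sum_profile _ 0 (i := N) le_rfl, sum_comm]
  exact sum_congr rfl fun σ _ => sum_congr rfl fun j _ => mul_assoc _ _ _

lemma mcflShapley_cons_cons_zero (T T' : ℕ) (m : Fin K → ℕ) (v : ℕ → ℝ) :
    mcflShapley (Fin.cons T (Fin.cons T' m)) 0 T v
      = ∑ σ : Profile m, (splitSum T (T' + 1) (fun u => marginalTerm v σ u u)
          - splitSum T T' (fun u => marginalTerm v σ (u + 1) u)) := by
  rw [mcflShapley_eq_sum_profile _ 0 (i := T) le_rfl]
  exact sum_Icc_sum_profile_eq_sum_splitSum (Fin.cons T' m) 0 T v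

lemma mcflShapley_cons_cons_one (T T' : ℕ) (m : Fin K → ℕ) (v : ℕ → ℝ) :
    mcflShapley (Fin.cons T (Fin.cons T' m)) 1 T' v
      = ∑ σ : Profile m, (splitSum T' (T + 1) (fun u => marginalTerm v σ u u)
          - splitSum T' T (fun u => marginalTerm v σ (u + 1) u)) := by
  have others : (fun a => (Fin.cons T (Fin.cons T' m) : Fin (K + 2) → ℕ) (Fin.succAbove 1 a))
      = Fin.cons T m := by
    funext a
    cases a using Fin.cases <;> simp
  rw [mcflShapley_eq_sum_profile _ 1 (i := T') le_rfl, others]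
  exact sum_Icc_sum_profile_eq_sum_splitSum (Fin.cons T m) 0 T' v

end

theorem shapley_split_difference_identity_general (K : ℕ) (others : Fin K → ℕ) (T T' : ℕ)
    (v : ℕ → ℝ) :
    mcflShapley (Fin.cons T (Fin.cons T' others)) 0 T v
      + mcflShapley (Fin.cons T (Fin.cons T' others)) 1 T' v
      - mcflShapley (Fin.cons (T + T') others) 0 (T + T') v
    = ∑ t ∈ Finset.range T, ∑ t₁ ∈ Finset.Icc 1 T',
        ∑ τ : ((a : Fin K) → Fin (others a + 1)),
          (((t₁ + t : ℕ) : ℝ) * mcflCoeff others τ (t₁ + t)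
              - ((t₁ + t + 1 : ℕ) : ℝ) * mcflCoeff others τ (t₁ + t + 1)) *
            (v ((∑ a, (τ a : ℕ)) + (t₁ + t)) - v ((∑ a, (τ a : ℕ)) + (t₁ + t) - 1)) := by
  rw [mcflShapley_cons_cons_zero, mcflShapley_cons_cons_one, mcflShapley_cons_zero,
    ← sum_add_distrib, ← sum_sub_distrib]
  calc _ = ∑ τ : Profile others, ∑ t ∈ range T, ∑ t₁ ∈ Icc 1 T',
          (((t₁ + t : ℕ) : ℝ) * marginalTerm v τ (t₁ + t) (t₁ + t)
            - ((t₁ + t + 1 : ℕ) : ℝ) * marginalTerm v τ (t₁ + t + 1) (t₁ + t)) :=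
        sum_congr rfl fun τ _ => splitSum_difference_identity T T' _ _
    _ = _ := by
        rw [sum_comm]
        refine sum_congr rfl fun t _ => ?_
        rw [sum_comm]
        refine sum_congr rfl fun t₁ _ => sum_congr rfl fun τ _ => ?_
        rw [marginalTerm, marginalTerm, Profile.size]
        ring

/-- Key difference identity: with `∇v^t_s = v(s+t) − v(s+t−1)`, the payoff difference
under false-name splitting satisfies
`ψ_{T,k₁} + ψ_{T',k₂} − ψ_{T+T',k}
  = ∑_{t=0}^{T−1} ∑_{t₁=1}^{T'} ∑_{τ} [(t₁+t) c_{t₁+t}(τ) − (t₁+t+1) c_{t₁+t+1}(τ)] ∇v^{t₁+t}_{|τ|}`,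
where `τ` ranges over the participation profiles of the other `K` agents. -/
theorem shapley_split_difference_identity (K : ℕ) (others : Fin K → ℕ) (T T' : ℕ)
    (hT : 1 ≤ T) (hT' : 1 ≤ T') (v : ℕ → ℝ) :
    mcflShapley (Fin.cons T (Fin.cons T' others)) 0 T v
      + mcflShapley (Fin.cons T (Fin.cons T' others)) 1 T' v
      - mcflShapley (Fin.cons (T + T') others) 0 (T + T') v
    = ∑ t ∈ Finset.range T, ∑ t₁ ∈ Finset.Icc 1 T',
        ∑ τ : ((a : Fin K) → Fin (others a + 1)),
          (((t₁ + t : ℕ) : ℝ) * mcflCoeff others τ (t₁ + t)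
              - ((t₁ + t + 1 : ℕ) : ℝ) * mcflCoeff others τ (t₁ + t + 1)) *
            (v ((∑ a, (τ a : ℕ)) + (t₁ + t)) - v ((∑ a, (τ a : ℕ)) + (t₁ + t) - 1)) :=
  shapley_split_difference_identity_general K others T T' v
end

section
/- The sequence v(n) = (n/(n+1))^{n+1} for n ≥ 1 is strictly increasing and strictly concave on the positive integers (its first differences v(n+1) − v(n) are positive and strictly decreasing). -/
/-!
Extend `v` to the reals as `revenue x = exp ((x + 1) log (x / (x + 1)))`. Its logarithmic
derivative is `s(x) = log (x / (x + 1)) + 1 / x`, and `log t < t - 1` at `t = (x + 1) / x` and at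
`t = x / (x + 1)` gives `0 < s(x) < 1 / (x (x + 1))`. Hence `v' = s v > 0`, and
`v'' = (s' + s²) v < 0` because `s' = -1 / (x² (x + 1))` while `s² < 1 / (x² (x + 1)²)`.
A strictly increasing, strictly concave function has positive, strictly decreasing differences
along `n, n + 1, n + 2`.
-/

open Real Set

theorem strictConcaveOn_of_hasDerivAt2_neg {D : Set ℝ} (hDo : IsOpen D) (hDc : Convex ℝ D)
    {f f' f'' : ℝ → ℝ} (hf : ∀ x ∈ D, HasDerivAt f (f' x) x)
    (hf' : ∀ x ∈ D, HasDerivAt f' (f'' x) x) (hf'' : ∀ x ∈ D, f'' x < 0) :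
    StrictConcaveOn ℝ D f := by
  have hanti : StrictAntiOn f' D :=
    strictAntiOn_of_hasDerivWithinAt_neg hDc
      (fun x hx => (hf' x hx).continuousAt.continuousWithinAt)
      (fun x hx => (hf' x (interior_subset hx)).hasDerivWithinAt)
      (fun x hx => hf'' x (interior_subset hx))
  refine StrictAntiOn.strictConcaveOn_of_deriv hDc
    (fun x hx => (hf x hx).continuousAt.continuousWithinAt) ?_
  rw [hDo.interior_eq]
  exact hanti.congr fun x hx => (hf x hx).deriv.symm

noncomputable def revenue (x : ℝ) : ℝ := exp ((x + 1) * (log x - log (x + 1)))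

noncomputable def revenueLogDeriv (x : ℝ) : ℝ := log x - log (x + 1) + x⁻¹

theorem revenue_natCast {n : ℕ} (hn : 0 < n) :
    revenue n = ((n : ℝ) / (n + 1)) ^ (n + 1) := by
  have hn0 : (0 : ℝ) < n := by exact_mod_cast hn
  rw [revenue, ← log_div hn0.ne' (by positivity), ← log_rpow (by positivity),
    exp_log (by positivity)]
  exact_mod_cast rpow_natCast _ (n + 1)

theorem hasDerivAt_log_sub_log_add_one {x : ℝ} (hx : 0 < x) :
    HasDerivAt (fun y => log y - log (y + 1)) (x⁻¹ - (x + 1)⁻¹) x :=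
  ((hasDerivAt_log hx.ne').sub (((hasDerivAt_id x).add_const 1).log (by positivity))).congr_deriv
    (by simp)

theorem hasDerivAt_revenue {x : ℝ} (hx : 0 < x) :
    HasDerivAt revenue (revenueLogDeriv x * revenue x) x := by
  refine (((hasDerivAt_id x).add_const 1).mul
    (hasDerivAt_log_sub_log_add_one hx)).exp.congr_deriv ?_
  rw [revenueLogDeriv, revenue, Pi.mul_apply, id]
  field_simp
  ring

theorem hasDerivAt_revenueLogDeriv {x : ℝ} (hx : 0 < x) :
    HasDerivAt revenueLogDeriv (-(x ^ 2 * (x + 1))⁻¹) x := by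
  refine ((hasDerivAt_log_sub_log_add_one hx).add (hasDerivAt_inv hx.ne')).congr_deriv ?_
  field_simp
  ring

theorem revenueLogDeriv_pos {x : ℝ} (hx : 0 < x) : 0 < revenueLogDeriv x := by
  have h := log_lt_sub_one_of_pos (x := (x + 1) / x) (by positivity) (by
    rw [ne_eq, div_eq_one_iff_eq hx.ne']; linarith)
  have : (x + 1) / x - 1 = x⁻¹ := by field_simp; ring
  rw [log_div (by positivity) hx.ne', this] at h
  rw [revenueLogDeriv]
  linarith

theorem revenueLogDeriv_lt {x : ℝ} (hx : 0 < x) : revenueLogDeriv x < (x * (x + 1))⁻¹ := by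
  have h := log_lt_sub_one_of_pos (x := x / (x + 1)) (by positivity) (by
    rw [ne_eq, div_eq_one_iff_eq (by positivity)]; linarith)
  have : x / (x + 1) - 1 = (x * (x + 1))⁻¹ - x⁻¹ := by field_simp; ring
  rw [log_div hx.ne' (by positivity), this] at h
  rw [revenueLogDeriv]
  linarith

theorem revenueLogDeriv_sq_lt {x : ℝ} (hx : 0 < x) :
    revenueLogDeriv x ^ 2 < (x ^ 2 * (x + 1))⁻¹ :=
  calc revenueLogDeriv x ^ 2 < ((x * (x + 1))⁻¹) ^ 2 :=
        pow_lt_pow_left₀ (revenueLogDeriv_lt hx) (revenueLogDeriv_pos hx).le two_ne_zero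
    _ = (x ^ 2 * (x + 1))⁻¹ * (x + 1)⁻¹ := by field_simp
    _ ≤ (x ^ 2 * (x + 1))⁻¹ :=
        mul_le_of_le_one_right (by positivity) (inv_le_one_of_one_le₀ (by linarith))

theorem strictMonoOn_revenue : StrictMonoOn revenue (Ioi 0) :=
  strictMonoOn_of_hasDerivWithinAt_pos (convex_Ioi 0)
    (fun _ hx => (hasDerivAt_revenue hx).continuousAt.continuousWithinAt)
    (fun _ hx => (hasDerivAt_revenue (interior_subset hx)).hasDerivWithinAt)
    (fun _ hx => mul_pos (revenueLogDeriv_pos (interior_subset hx)) (exp_pos _))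

theorem strictConcaveOn_revenue : StrictConcaveOn ℝ (Ioi 0) revenue := by
  refine strictConcaveOn_of_hasDerivAt2_neg isOpen_Ioi (convex_Ioi 0)
    (fun _ hx => hasDerivAt_revenue hx)
    (fun _ hx => (hasDerivAt_revenueLogDeriv hx).mul (hasDerivAt_revenue hx)) fun x hx => ?_
  rw [show -(x ^ 2 * (x + 1))⁻¹ * revenue x + revenueLogDeriv x * (revenueLogDeriv x * revenue x)
      = (revenueLogDeriv x ^ 2 - (x ^ 2 * (x + 1))⁻¹) * revenue x by ring]
  exact mul_neg_of_neg_of_pos (sub_neg.2 (revenueLogDeriv_sq_lt hx)) (exp_pos _)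

/-- The sequence `v(n) = (n/(n+1))^{n+1}` is strictly increasing with strictly
decreasing first differences on the positive integers. -/
theorem v_strict_increasing_strict_concave (n : ℕ) (hn : 1 ≤ n) :
    ((n : ℝ) / ((n : ℝ) + 1)) ^ (n + 1) < (((n : ℝ) + 1) / ((n : ℝ) + 2)) ^ (n + 2)
    ∧ (((n : ℝ) + 2) / ((n : ℝ) + 3)) ^ (n + 3) - (((n : ℝ) + 1) / ((n : ℝ) + 2)) ^ (n + 2)
        < (((n : ℝ) + 1) / ((n : ℝ) + 2)) ^ (n + 2) - ((n : ℝ) / ((n : ℝ) + 1)) ^ (n + 1) := by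
  have hn0 : (0 : ℝ) < n := by exact_mod_cast hn
  have hv_eq (k : ℕ) :
      revenue (n + k) = (((n : ℝ) + k) / ((n : ℝ) + k + 1)) ^ (n + k + 1) := by
    simpa using revenue_natCast (n := n + k) (by omega)
  have hv0 := hv_eq 0
  have hv1 := hv_eq 1
  have hv2 := hv_eq 2
  norm_num [add_assoc] at hv0 hv1 hv2
  rw [← hv0, ← hv1, ← hv2]
  have hn1 : (n : ℝ) + 1 ∈ Ioi 0 := mem_Ioi.2 (by positivity)
  have hn2 : (n : ℝ) + 2 ∈ Ioi 0 := mem_Ioi.2 (by positivity)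
  refine ⟨strictMonoOn_revenue hn0 hn1 (by linarith), ?_⟩
  have hslopes := strictConcaveOn_revenue.slope_anti_adjacent hn0 hn2
    (lt_add_one (n : ℝ)) (by linarith : (n : ℝ) + 1 < n + 2)
  norm_num at hslopes
  exact hslopes
end
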